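/- Let m ≥ 2 and h ≥ 1, and let T(m,h) be the complete m-ary tree of height h. Then for every depth-1 vertex v, Gain(T(m,h), Z(root), μ2) = Gain(T(m,h), Z(v), μ2) = m^{h+1}(m^h−1)/(m^{h+2}−m^{h+1}+m^h−1). -/

import Mathlib

/-- The competitive-diffusion payoff of Player 1 with starting vertex `x` against
starting vertex `y`: the number of vertices strictly closer to `x` than to `y`. -/
noncomputable def gain {V : Type*} (G : SimpleGraph V) (x y : V) : ℕ :=
  {u : V | G.dist u x < G.dist u y}.ncard

/-- The expected gain of Player 1 playing mixed strategy `X` against mixed strategy `Y`. -/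
noncomputable def Gain {V : Type*} (G : SimpleGraph V) [Fintype V] (X Y : V → ℝ) : ℝ :=
  ∑ x : V, ∑ y : V, X x * Y y * (gain G x y : ℝ)

/-- The pure strategy `Z(v)` concentrated on vertex `v`. -/
def pureStrat {V : Type*} [DecidableEq V] (v : V) : V → ℝ := fun u => if u = v then 1 else 0

/-- Vertices of the complete `m`-ary tree of height `h`: lists over `Fin m` of length
at most `h`; the length of the list is the depth of the vertex. -/
def TreeVert (m h : ℕ) := {l : List (Fin m) // l.length ≤ h}

noncomputable instance (m h : ℕ) : Fintype (TreeVert m h) :=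
  (List.finite_length_le (Fin m) h).fintype

instance (m h : ℕ) : DecidableEq (TreeVert m h) := Subtype.instDecidableEq

instance (m h : ℕ) : Nonempty (TreeVert m h) := ⟨⟨[], by simp⟩⟩

/-- The complete `m`-ary tree of height `h`: each vertex of depth `< h` has exactly
`m` children, obtained by prepending an element of `Fin m`. -/
def CompleteTree (m h : ℕ) : SimpleGraph (TreeVert m h) :=
  SimpleGraph.fromRel (fun x y => x.1 = y.1.tail ∧ y.1.length = x.1.length + 1)

/-- The root of the complete `m`-ary tree. -/
def root (m h : ℕ) : TreeVert m h := ⟨[], by simp⟩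

noncomputable def alpha1 (m h : ℕ) : ℝ :=
  ((m : ℝ) ^ h - 1) / ((m : ℝ) ^ (h + 2) - (m : ℝ) ^ (h + 1) + (m : ℝ) ^ h - 1)

noncomputable def beta1 (m h : ℕ) : ℝ :=
  ((m : ℝ) - 1) * (m : ℝ) ^ h / ((m : ℝ) ^ (h + 2) - (m : ℝ) ^ (h + 1) + (m : ℝ) ^ h - 1)

noncomputable def alpha2 (m h : ℕ) : ℝ :=
  ((m : ℝ) - 1) * ((m : ℝ) ^ (h + 1) - (m : ℝ) ^ h + 1) /
    ((m : ℝ) ^ (h + 2) - (m : ℝ) ^ (h + 1) + (m : ℝ) ^ h - 1)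

noncomputable def beta2 (m h : ℕ) : ℝ :=
  ((m : ℝ) ^ h - 1) / ((m : ℝ) ^ (h + 2) - (m : ℝ) ^ (h + 1) + (m : ℝ) ^ h - 1)

/-- The mixed strategy `μ₁`: probability `α₁` on the root, `β₁` on each depth-1 vertex. -/
noncomputable def mu1 (m h : ℕ) : TreeVert m h → ℝ := fun v =>
  if v.1.length = 0 then alpha1 m h else if v.1.length = 1 then beta1 m h else 0

/-- The mixed strategy `μ₂`: probability `α₂` on the root, `β₂` on each depth-1 vertex. -/
noncomputable def mu2 (m h : ℕ) : TreeVert m h → ℝ := fun v =>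
  if v.1.length = 0 then alpha2 m h else if v.1.length = 1 then beta2 m h else 0

/-!
Vertices are lists that grow at the front, so the subtree below the depth-one vertex `[a]`
consists of the lists ending in `a`. The distances to the root and to `[a]` are the depth and the
depth `∓ 1` (according as the list ends in `a` or not): each is realised by a walk, and is a lower
bound because it changes by at most one along every edge. Hence against `[a]` the root wins the
`m ^ h` vertices outside that subtree, while `[a]` wins exactly the subtree, of size
`1 + m + ⋯ + m ^ (h - 1)`, against the root and against every other depth-one vertex. Averaging
against `μ₂` and using `(m - 1)(1 + m + ⋯ + m ^ (h - 1)) = m ^ h - 1` gives both values.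
-/

namespace SimpleGraph

variable {V : Type*} {G : SimpleGraph V}

theorem Walk.abs_sub_le_length (f : V → ℤ) (hf : ∀ ⦃x y⦄, G.Adj x y → |f x - f y| ≤ 1)
    {x y : V} (p : G.Walk x y) : |f x - f y| ≤ p.length := by
  induction p with
  | nil => simp
  | @cons u w _ huw p ih =>
    calc |f u - f _| ≤ |f u - f w| + |f w - f _| := abs_sub_le _ _ _
      _ ≤ 1 + p.length := add_le_add (hf huw) ih
      _ = (p.cons huw).length := by push_cast [Walk.length_cons]; ring

theorem dist_eq_length_of_abs_sub_le_one (f : V → ℤ) (hf : ∀ ⦃x y⦄, G.Adj x y → |f x - f y| ≤ 1)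
    {x y : V} (p : G.Walk x y) (hp : f x - f y = p.length) : G.dist x y = p.length := by
  obtain ⟨q, hq⟩ := p.reachable.exists_walk_length_eq_dist
  have := q.abs_sub_le_length f hf
  rw [hp, hq, Nat.abs_cast] at this
  exact le_antisymm (dist_le p) (by exact_mod_cast this)

end SimpleGraph

theorem Gain_pureStrat {V : Type*} [Fintype V] [DecidableEq V] (G : SimpleGraph V) (x : V)
    (Y : V → ℝ) : Gain G (pureStrat x) Y = ∑ y, Y y * gain G x y := by
  simp [Gain, pureStrat]

theorem gain_self {V : Type*} (G : SimpleGraph V) (x : V) : gain G x x = 0 := by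
  simp [gain]

theorem pow_add_two_sub_pow_succ_add_pow_sub_one_pos {x : ℝ} (hx : 1 < x) (n : ℕ) :
    0 < x ^ (n + 2) - x ^ (n + 1) + x ^ n - 1 := by
  have hpow : 1 ≤ x ^ n := one_le_pow₀ hx.le
  have hquad : 0 < x * (x - 1) := mul_pos (by linarith) (by linarith)
  nlinarith [show x ^ (n + 2) - x ^ (n + 1) + x ^ n - 1 = x ^ n * (x * (x - 1)) + (x ^ n - 1) by
    ring]

open SimpleGraph

namespace CompleteTree

variable {m h : ℕ}

theorem adj_iff {x y : TreeVert m h} :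
    (CompleteTree m h).Adj x y ↔ (∃ c, y.1 = c :: x.1) ∨ ∃ c, x.1 = c :: y.1 := by
  have isChild_iff : ∀ a b : TreeVert m h,
      (a.1 = b.1.tail ∧ b.1.length = a.1.length + 1) ↔ ∃ c, b.1 = c :: a.1 := by
    rintro a ⟨_ | ⟨c, t⟩, hb⟩
    · simp
    · simpa [eq_comm] using congrArg List.length
  rw [CompleteTree, fromRel_adj, isChild_iff, isChild_iff]
  refine ⟨And.right, fun hxy => ⟨?_, hxy⟩⟩
  rintro rfl
  obtain ⟨c, hc⟩ | ⟨c, hc⟩ := hxy <;> exact List.cons_ne_self c _ hc.symm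

theorem adj_of_eq_cons {x y : TreeVert m h} {c : Fin m} (hxy : x.1 = c :: y.1) :
    (CompleteTree m h).Adj x y :=
  adj_iff.mpr (.inr ⟨c, hxy⟩)

theorem exists_walk_of_eq_append {y : TreeVert m h} :
    ∀ (t : List (Fin m)) {x : TreeVert m h}, x.1 = t ++ y.1 →
      ∃ p : (CompleteTree m h).Walk x y, p.length = t.length
  | [], x, hxy => by
    obtain rfl : x = y := Subtype.ext hxy
    exact ⟨.nil, rfl⟩
  | c :: t, x, hxy => by
    let x' : TreeVert m h := ⟨t ++ y.1, by have := x.2; simp [hxy] at this ⊢; omega⟩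
    obtain ⟨p, hp⟩ := exists_walk_of_eq_append t (x := x') rfl
    exact ⟨.cons (adj_of_eq_cons (y := x') hxy) p, by simp [hp]⟩

theorem dist_root (u : TreeVert m h) : (CompleteTree m h).dist u (root m h) = u.1.length := by
  obtain ⟨p, hp⟩ := exists_walk_of_eq_append u.1 (x := u) (y := root m h) (by simp [root])
  rw [dist_eq_length_of_abs_sub_le_one (fun u => u.1.length) ?_ p (by rw [hp]; simp [root]), hp]
  intro x y hxy
  obtain ⟨c, hc⟩ | ⟨c, hc⟩ := adj_iff.mp hxy <;> simp [hc]

def depth1 (a : Fin m) : TreeVert m (h + 1) := ⟨[a], by simp⟩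

def distDepth1 (a : Fin m) (u : TreeVert m h) : ℤ :=
  if u.1.getLast? = some a then u.1.length - 1 else u.1.length + 1

theorem abs_distDepth1_sub_le_one (a : Fin m) {x y : TreeVert m h}
    (hxy : (CompleteTree m h).Adj x y) : |distDepth1 a x - distDepth1 a y| ≤ 1 := by
  have of_child : ∀ {x y : TreeVert m h} (c : Fin m), y.1 = c :: x.1 →
      |distDepth1 a x - distDepth1 a y| ≤ 1 := by
    intro x y c hc
    unfold distDepth1
    rw [hc]
    cases x.1 with
    | nil => by_cases hca : c = a <;> simp [hca]
    | cons d t =>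
      rw [List.getLast?_cons_cons]
      split_ifs <;> simp
  obtain ⟨c, hc⟩ | ⟨c, hc⟩ := adj_iff.mp hxy
  · exact of_child c hc
  · rw [abs_sub_comm]
    exact of_child c hc

theorem dist_depth1 (a : Fin m) (u : TreeVert m (h + 1)) :
    ((CompleteTree m (h + 1)).dist u (depth1 a) : ℤ) = distDepth1 a u := by
  have hdist := dist_eq_length_of_abs_sub_le_one (distDepth1 a)
    (fun _ _ => abs_distDepth1_sub_le_one a) (x := u) (y := depth1 (h := h) a)
  have h_depth1 : distDepth1 a (depth1 a : TreeVert m (h + 1)) = 0 := by simp [distDepth1, depth1]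
  by_cases hu : u.1.getLast? = some a
  · obtain ⟨p, hp⟩ := exists_walk_of_eq_append u.1.dropLast (x := u) (y := depth1 a)
      (List.dropLast_append_getLast? a hu).symm
    have hlen := List.length_pos_of_mem (List.mem_of_getLast? hu)
    have hu' : distDepth1 a u = p.length := by
      rw [distDepth1, if_pos hu, hp, List.length_dropLast]
      omega
    rw [hdist p (by rw [h_depth1, hu', sub_zero]), hu']
  · obtain ⟨p, hp⟩ := exists_walk_of_eq_append u.1 (x := u) (y := root m (h + 1)) (by simp [root])
    let q := p.concat (adj_of_eq_cons (x := depth1 a) (y := root m (h + 1)) (c := a) rfl).symm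
    have hu' : distDepth1 a u = q.length := by simp [distDepth1, hu, q, hp]
    rw [hdist q (by rw [h_depth1, hu', sub_zero]), hu']

def consEquiv : TreeVert m (h + 1) ≃ Option (Fin m × TreeVert m h) where
  toFun
    | ⟨[], _⟩ => none
    | ⟨c :: t, ht⟩ => some (c, ⟨t, by simpa using ht⟩)
  invFun
    | none => root m (h + 1)
    | some (c, t) => ⟨c :: t.1, by simpa using t.2⟩
  left_inv := by rintro ⟨_ | ⟨c, t⟩, ht⟩ <;> rfl
  right_inv := by rintro (_ | ⟨c, t⟩) <;> rfl

theorem card_treeVert (m h : ℕ) :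
    Fintype.card (TreeVert m h) = ∑ k ∈ Finset.range (h + 1), m ^ k := by
  induction h with
  | zero =>
    rw [Fintype.card_eq_one_iff.mpr ⟨root m 0, fun u => Subtype.ext ?_⟩]
    · simp
    · exact List.eq_nil_of_length_eq_zero (Nat.le_zero.mp u.2)
  | succ h ih =>
    rw [Fintype.card_congr consEquiv, Fintype.card_option, Fintype.card_prod, Fintype.card_fin,
      ih]
    exact geom_sum_succ.symm

/-- The subtree below `depth1 a` is a copy of the tree of height `h`, rooted at the end `a`. -/
def getLastEquiv (a : Fin m) :
    {u : TreeVert m (h + 1) // u.1.getLast? = some a} ≃ TreeVert m h where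
  toFun u := ⟨u.1.1.dropLast, by have := u.1.2; rw [List.length_dropLast]; omega⟩
  invFun l := ⟨⟨l.1 ++ [a], by simpa using l.2⟩, by simp⟩
  left_inv u := Subtype.ext (Subtype.ext (List.dropLast_append_getLast? a u.2))
  right_inv l := Subtype.ext (by simp)

theorem ncard_getLast_eq (a : Fin m) :
    {u : TreeVert m (h + 1) | u.1.getLast? = some a}.ncard = Fintype.card (TreeVert m h) := by
  rw [← Nat.card_coe_set_eq]
  exact (Nat.card_congr (getLastEquiv a)).trans Nat.card_eq_fintype_card

theorem ncard_getLast_ne (a : Fin m) :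
    {u : TreeVert m (h + 1) | u.1.getLast? ≠ some a}.ncard = m ^ (h + 1) := by
  have hsplit := Set.ncard_add_ncard_compl {u : TreeVert m (h + 1) | u.1.getLast? = some a}
  rw [ncard_getLast_eq, Nat.card_eq_fintype_card, card_treeVert m (h + 1), Finset.sum_range_succ,
    ← card_treeVert] at hsplit
  exact Nat.add_left_cancel hsplit

theorem gain_root_depth1 (a : Fin m) :
    gain (CompleteTree m (h + 1)) (root m (h + 1)) (depth1 a) = m ^ (h + 1) := by
  rw [gain, ← ncard_getLast_ne a]
  congr 1
  ext u
  rw [Set.mem_ofPred, Set.mem_ofPred, ← Nat.cast_lt (α := ℤ), dist_depth1, dist_root, distDepth1]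
  split_ifs with hu <;> simp [hu]

theorem gain_depth1 (a : Fin m) {x : TreeVert m (h + 1)}
    (hle : ∀ u, (CompleteTree m (h + 1)).dist u x ≤ u.1.length + 1)
    (hge : ∀ u : TreeVert m (h + 1), u.1.getLast? = some a →
      u.1.length ≤ (CompleteTree m (h + 1)).dist u x) :
    gain (CompleteTree m (h + 1)) (depth1 a) x = Fintype.card (TreeVert m h) := by
  rw [gain, ← ncard_getLast_eq a]
  congr 1
  ext u
  rw [Set.mem_ofPred, Set.mem_ofPred, ← Nat.cast_lt (α := ℤ), dist_depth1, distDepth1]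
  have := hle u
  split_ifs with hu
  · have := hge u hu
    simp only [hu, iff_true]
    omega
  · simp only [hu, iff_false]
    omega

theorem gain_depth1_root (a : Fin m) :
    gain (CompleteTree m (h + 1)) (depth1 a) (root m (h + 1)) = Fintype.card (TreeVert m h) :=
  gain_depth1 a (fun u => by rw [dist_root]; omega) (fun u _ => (dist_root u).ge)

theorem gain_depth1_depth1 {a b : Fin m} (hab : a ≠ b) :
    gain (CompleteTree m (h + 1)) (depth1 a) (depth1 b) = Fintype.card (TreeVert m h) := by
  refine gain_depth1 a (fun u => ?_) (fun u hu => ?_)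
  · have := dist_depth1 b u
    unfold distDepth1 at this
    split_ifs at this <;> omega
  · have := dist_depth1 b u
    rw [distDepth1, if_neg (by rw [hu]; simpa using hab)] at this
    omega

theorem sum_mu2_mul (g : TreeVert m (h + 1) → ℝ) :
    ∑ y, mu2 m (h + 1) y * g y =
      alpha2 m (h + 1) * g (root m (h + 1)) + beta2 m (h + 1) * ∑ a, g (depth1 a) := by
  rw [← consEquiv.symm.sum_comp, Fintype.sum_option, Fintype.sum_prod_type, Finset.mul_sum]
  congr 1
  refine Fintype.sum_congr _ _ fun a => Fintype.sum_eq_single (root m h) fun t ht => ?_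
  have : t.1.length ≠ 0 := fun h0 => ht (Subtype.ext (List.eq_nil_of_length_eq_zero h0))
  simp [mu2, consEquiv, this]

theorem Gain_root_mu2 :
    Gain (CompleteTree m (h + 1)) (pureStrat (root m (h + 1))) (mu2 m (h + 1)) =
      m * m ^ (h + 1) * beta2 m (h + 1) := by
  simp only [Gain_pureStrat, sum_mu2_mul, gain_self, gain_root_depth1, Nat.cast_zero, mul_zero,
    zero_add, Nat.cast_pow, Finset.sum_const, Finset.card_univ, Fintype.card_fin, nsmul_eq_mul]
  ring

theorem Gain_depth1_mu2 (a : Fin m) :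
    Gain (CompleteTree m (h + 1)) (pureStrat (depth1 a)) (mu2 m (h + 1)) =
      (alpha2 m (h + 1) + (m - 1) * beta2 m (h + 1)) * Fintype.card (TreeVert m h) := by
  have hm : 1 ≤ m := a.pos
  rw [Gain_pureStrat, sum_mu2_mul, gain_depth1_root, Fintype.sum_eq_add_sum_compl a, gain_self,
    Finset.sum_congr rfl fun b hb => by
      rw [gain_depth1_depth1 (Ne.symm (by simpa using hb))]]
  simp only [Nat.cast_zero, zero_add, Finset.sum_const, Finset.card_compl, Fintype.card_fin,
    Finset.card_singleton, nsmul_eq_mul, Nat.cast_sub hm, Nat.cast_one]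
  ring

end CompleteTree

theorem stmt_15_general (m h : ℕ) (hm : 2 ≤ m)
    (v : TreeVert m h) (hv : v.1.length = 1) :
    Gain (CompleteTree m h) (pureStrat (root m h)) (mu2 m h) =
      Gain (CompleteTree m h) (pureStrat v) (mu2 m h) ∧
    Gain (CompleteTree m h) (pureStrat v) (mu2 m h) =
      (m : ℝ) ^ (h + 1) * ((m : ℝ) ^ h - 1) /
        ((m : ℝ) ^ (h + 2) - (m : ℝ) ^ (h + 1) + (m : ℝ) ^ h - 1) := by
  obtain ⟨a, ha⟩ := List.length_eq_one_iff.mp hv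
  obtain ⟨h, rfl⟩ : ∃ h', h = h' + 1 := ⟨h - 1, by have := v.2; omega⟩
  obtain rfl : v = CompleteTree.depth1 a := Subtype.ext ha
  rw [CompleteTree.Gain_root_mu2, CompleteTree.Gain_depth1_mu2, CompleteTree.card_treeVert,
    alpha2, beta2]
  have hgeom : (∑ k ∈ Finset.range (h + 1), (m : ℝ) ^ k) * (m - 1) = m ^ (h + 1) - 1 :=
    geom_sum_mul _ _
  have hD := (pow_add_two_sub_pow_succ_add_pow_sub_one_pos (x := (m : ℝ))
    (by exact_mod_cast hm) (h + 1)).ne'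
  push_cast
  constructor
  · field_simp
    linear_combination (-(m : ℝ) ^ (h + 2)) * hgeom
  · field_simp
    linear_combination ((m : ℝ) ^ (h + 2)) * hgeom

/-- On the complete `m`-ary tree of height `h`, for every depth-1 vertex `v`,
`Gain(T, Z(root), μ₂) = Gain(T, Z(v), μ₂) = m^{h+1}(m^h-1)/(m^{h+2}-m^{h+1}+m^h-1)`. -/
theorem stmt_15 (m h : ℕ) (hm : 2 ≤ m) (hh : 1 ≤ h)
    (v : TreeVert m h) (hv : v.1.length = 1) :
    Gain (CompleteTree m h) (pureStrat (root m h)) (mu2 m h) =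
      Gain (CompleteTree m h) (pureStrat v) (mu2 m h) ∧
    Gain (CompleteTree m h) (pureStrat v) (mu2 m h) =
      (m : ℝ) ^ (h + 1) * ((m : ℝ) ^ h - 1) /
        ((m : ℝ) ^ (h + 2) - (m : ℝ) ^ (h + 1) + (m : ℝ) ^ h - 1) :=
  stmt_15_general m h hm v hv
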